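/- Let a, h, k be positive real numbers with k < (3/4)·(√8/4)·(h²/a), and let N ≥ 1 be a natural number. Then for every j ∈ Fin N, |R(i·k·(a/h²)·(−5/2 + (8/3)·cos(2πj/N) − (1/6)·cos(4πj/N)))| ≤ 1, with strict inequality whenever −5/2 + (8/3)·cos(2πj/N) − (1/6)·cos(4πj/N) ≠ 0. (Linearized stability of the RK4 scheme with fourth-order central differencing and periodic boundary conditions for the linear Schrödinger equation i∂Ψ/∂t + a∇²Ψ = 0 in one dimension; the fourth-order bound is 3/4 of the second-order bound.) -/

import Mathlib

/-!
On the imaginary axis `|R(iy)|² = 1 - y⁶(8 - y²)/576`, so RK4 is stable exactly on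
`|y| ≤ √8`, strictly away from `y = 0`. Writing `c = cos θ`, the fourth-order symbol is
`-(1 - c)(7 - c)/3 ∈ [-16/3, 0]`, so under the hypothesis on `k` the quantity
`y = k (a/h²) μ` satisfies `|y| < (3/4)(√8/4)(16/3) = √8`.
-/

open Complex

noncomputable def R (p : ℂ) : ℂ := 1 + p + p ^ 2 / 2 + p ^ 3 / 6 + p ^ 4 / 24

theorem R_I_mul (y : ℝ) :
    R (I * y) = ((1 - y ^ 2 / 2 + y ^ 4 / 24 : ℝ) : ℂ) + ((y - y ^ 3 / 6 : ℝ) : ℂ) * I := by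
  have hI3 : I ^ 3 = -I := by rw [pow_succ, I_sq, neg_one_mul]
  have hI4 : I ^ 4 = 1 := I_pow_four
  simp only [R, mul_pow, I_sq, hI3, hI4]
  push_cast
  ring

theorem normSq_R_I_mul (y : ℝ) : normSq (R (I * y)) = 1 - y ^ 6 * (8 - y ^ 2) / 576 := by
  rw [R_I_mul, normSq_add_mul_I]
  ring

theorem norm_R_I_mul_le_one {y : ℝ} (hy : |y| ≤ √8) : ‖R (I * y)‖ ≤ 1 := by
  have hy8 : y ^ 2 ≤ 8 := (Real.sq_le (by norm_num)).2 (abs_le.1 hy)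
  have hsq : ‖R (I * y)‖ ^ 2 ≤ 1 := by
    rw [Complex.sq_norm, normSq_R_I_mul]
    have : 0 ≤ y ^ 6 * (8 - y ^ 2) := mul_nonneg (by positivity) (by linarith)
    linarith
  exact (sq_le_one_iff₀ (norm_nonneg _)).1 hsq

theorem norm_R_I_mul_lt_one {y : ℝ} (hy0 : y ≠ 0) (hy : |y| < √8) : ‖R (I * y)‖ < 1 := by
  have hy8 : y ^ 2 < 8 := Real.sq_lt.2 (abs_lt.1 hy)
  have hsq : ‖R (I * y)‖ ^ 2 < 1 := by
    rw [Complex.sq_norm, normSq_R_I_mul]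
    have : 0 < y ^ 6 * (8 - y ^ 2) := mul_pos (by positivity) (by linarith)
    linarith
  exact (sq_lt_one_iff₀ (norm_nonneg _)).1 hsq

/-- The symbol of the fourth-order central difference `(-u₋₂ + 16u₋₁ - 30u₀ + 16u₁ - u₂)/12`. -/
noncomputable def cd4Symbol (θ : ℝ) : ℝ := -5 / 2 + 8 / 3 * Real.cos θ - 1 / 6 * Real.cos (2 * θ)

theorem cd4Symbol_eq (θ : ℝ) : cd4Symbol θ = -(1 - Real.cos θ) * (7 - Real.cos θ) / 3 := by
  rw [cd4Symbol, Real.cos_two_mul]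
  ring

theorem abs_cd4Symbol_le (θ : ℝ) : |cd4Symbol θ| ≤ 16 / 3 := by
  have hc1 := Real.neg_one_le_cos θ
  have hc2 := Real.cos_le_one θ
  rw [cd4Symbol_eq, abs_le]
  constructor <;> nlinarith

theorem abs_mul_cd4Symbol_lt {r : ℝ} (hr0 : 0 ≤ r) (hr : r < 3 / 4 * (√8 / 4)) (θ : ℝ) :
    |r * cd4Symbol θ| < √8 :=
  calc |r * cd4Symbol θ| = r * |cd4Symbol θ| := by rw [abs_mul, abs_of_nonneg hr0]
    _ ≤ r * (16 / 3) := mul_le_mul_of_nonneg_left (abs_cd4Symbol_le θ) hr0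
    _ < 3 / 4 * (√8 / 4) * (16 / 3) := by gcongr
    _ = √8 := by ring

theorem rk4_cd4_periodic_stable_general (a h k : ℝ) (ha : 0 < a) (hh : 0 < h) (hk : 0 < k)
    (hbound : k < 3 / 4 * (Real.sqrt 8 / 4) * (h ^ 2 / a)) (N : ℕ) :
    ∀ j : Fin N,
      ‖R (Complex.I *
          ((k * (a / h ^ 2) *
            (-5/2 + (8/3) * Real.cos (2 * Real.pi * (j : ℕ) / N)
              - (1/6) * Real.cos (4 * Real.pi * (j : ℕ) / N)) : ℝ) : ℂ))‖ ≤ 1 ∧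
      ((-5/2 + (8/3) * Real.cos (2 * Real.pi * (j : ℕ) / N)
          - (1/6) * Real.cos (4 * Real.pi * (j : ℕ) / N) : ℝ) ≠ 0 →
        ‖R (Complex.I *
          ((k * (a / h ^ 2) *
            (-5/2 + (8/3) * Real.cos (2 * Real.pi * (j : ℕ) / N)
              - (1/6) * Real.cos (4 * Real.pi * (j : ℕ) / N)) : ℝ) : ℂ))‖ < 1) := by
  intro j
  have hθ : 4 * Real.pi * (j : ℕ) / N = 2 * (2 * Real.pi * (j : ℕ) / N) := by ring
  rw [hθ]
  change ‖R (I * ((k * (a / h ^ 2) * cd4Symbol _ : ℝ) : ℂ))‖ ≤ 1 ∧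
    (cd4Symbol _ ≠ 0 → ‖R (I * ((k * (a / h ^ 2) * cd4Symbol _ : ℝ) : ℂ))‖ < 1)
  have hr0 : 0 < k * (a / h ^ 2) := by positivity
  have hr : k * (a / h ^ 2) < 3 / 4 * (√8 / 4) := by
    rwa [← lt_div_iff₀ (by positivity), div_div_eq_mul_div, mul_div_assoc]
  have hy := abs_mul_cd4Symbol_lt hr0.le hr (2 * Real.pi * (j : ℕ) / N)
  exact ⟨norm_R_I_mul_le_one hy.le, fun hμ => norm_R_I_mul_lt_one (mul_ne_zero hr0.ne' hμ) hy⟩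

/-- Linearized stability of RK4 with fourth-order central differencing and
periodic boundary conditions for the 1D linear Schrödinger equation: if
`k < (3/4)·(√8/4)·(h²/a)` then
`|R(i·k·(a/h²)·(−5/2 + (8/3)·cos(2πj/N) − (1/6)·cos(4πj/N)))| ≤ 1` for every
eigenvalue index `j`, strictly whenever the eigenvalue is nonzero. -/
theorem rk4_cd4_periodic_stable (a h k : ℝ) (ha : 0 < a) (hh : 0 < h) (hk : 0 < k)
    (hbound : k < 3 / 4 * (Real.sqrt 8 / 4) * (h ^ 2 / a)) (N : ℕ) (hN : 1 ≤ N) :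
    ∀ j : Fin N,
      ‖R (Complex.I *
          ((k * (a / h ^ 2) *
            (-5/2 + (8/3) * Real.cos (2 * Real.pi * (j : ℕ) / N)
              - (1/6) * Real.cos (4 * Real.pi * (j : ℕ) / N)) : ℝ) : ℂ))‖ ≤ 1 ∧
      ((-5/2 + (8/3) * Real.cos (2 * Real.pi * (j : ℕ) / N)
          - (1/6) * Real.cos (4 * Real.pi * (j : ℕ) / N) : ℝ) ≠ 0 →
        ‖R (Complex.I *
          ((k * (a / h ^ 2) *
            (-5/2 + (8/3) * Real.cos (2 * Real.pi * (j : ℕ) / N)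
              - (1/6) * Real.cos (4 * Real.pi * (j : ℕ) / N)) : ℝ) : ℂ))‖ < 1) :=
  rk4_cd4_periodic_stable_general a h k ha hh hk hbound N
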